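/- arXiv:1502.04244 — 7 statements merged into one kernel-verified Lean document; each statement's English description precedes it below -/
import Mathlib

section
/- Let q be a prime power, m ≥ 1, r = q^m, and let k be an integer with 1 ≤ k ≤ 2m such that (q^m - 1) divides 2(q^k - 1). Then k = m or k = 2m. -/
/-- For `q ≥ 2` and `1 ≤ t < m`, `q^m - 1` does not divide `2*(q^t - 1)`. -/
lemma aux_no_dvd (q m t : ℕ) (hq : 2 ≤ q) (ht1 : 1 ≤ t) (htm : t < m) :
    ¬ (q ^ m - 1 ∣ 2 * (q ^ t - 1)) := by
  intro h
  have hqt : 2 ≤ q ^ t := le_trans hq (Nat.le_self_pow (by omega) q)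
  have hqm : 2 ≤ q ^ m := le_trans hq (Nat.le_self_pow (by omega) q)
  have hle : q ^ m - 1 ≤ 2 * (q ^ t - 1) := Nat.le_of_dvd (by omega) h
  have h2 : 2 * q ^ t ≤ q ^ m := by
    calc 2 * q ^ t ≤ q * q ^ t := by
          exact Nat.mul_le_mul_right _ hq
      _ = q ^ (t + 1) := by ring
      _ ≤ q ^ m := Nat.pow_le_pow_right (by omega) (by omega)
  omega

/-- If `q = p^l` is a prime power, `r = q^m`, `1 ≤ k ≤ 2m` and
`q^m - 1` divides `2 * (q^k - 1)`, then `k = m` or `k = 2m`. -/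
theorem stmt1 (p l q m r k : ℕ) (hp : p.Prime) (hl : 1 ≤ l) (hq : q = p ^ l)
    (hm : 1 ≤ m) (hr : r = q ^ m) (hk1 : 1 ≤ k) (hk2 : k ≤ 2 * m)
    (hdvd : (q ^ m - 1) ∣ 2 * (q ^ k - 1)) :
    k = m ∨ k = 2 * m := by
  have hq2 : 2 ≤ q := by
    have := hp.two_le
    calc 2 ≤ p := this
      _ ≤ p ^ l := Nat.le_self_pow (by omega) p
      _ = q := hq.symm
  -- first, k ≥ m
  have hkm : m ≤ k := by
    by_contra hlt
    push_neg at hlt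
    exact aux_no_dvd q m k hq2 hk1 hlt hdvd
  -- write k = m + t
  set t := k - m with htdef
  have hk : k = m + t := by omega
  rcases Nat.eq_zero_or_pos t with h0 | hpos
  · left; omega
  · right
    have hqm : 1 ≤ q ^ m := Nat.one_le_pow _ _ (by omega)
    have hqt : 1 ≤ q ^ t := Nat.one_le_pow _ _ (by omega)
    have hsplit : 2 * (q ^ k - 1) = q ^ t * (2 * (q ^ m - 1)) + 2 * (q ^ t - 1) := by
      have hqk : q ^ k = q ^ t * q ^ m := by
        rw [hk, pow_add]; ring
      have hqk1 : 1 ≤ q ^ k := Nat.one_le_pow _ _ (by omega)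
      have : q ^ t * (q ^ m - 1) = q ^ t * q ^ m - q ^ t := by
        rw [Nat.mul_sub, Nat.mul_one]
      nlinarith [Nat.sub_add_cancel hqm, Nat.sub_add_cancel hqt, Nat.sub_add_cancel hqk1,
        Nat.sub_le (q ^ m) 1, Nat.sub_le (q ^ t) 1]
    have hd2 : q ^ m - 1 ∣ 2 * (q ^ t - 1) := by
      have hd1 : q ^ m - 1 ∣ q ^ t * (2 * (q ^ m - 1)) := ⟨q ^ t * 2, by ring⟩
      have := (Nat.dvd_add_right hd1).mp (hsplit ▸ hdvd)
      exact this
    have htm : ¬ t < m := fun hlt => aux_no_dvd q m t hq2 hpos hlt hd2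
    omega
end

section
/- Let q be a prime power, m ≥ 1, r = q^m, and let γ be a primitive element of GF(r²). Let d = s(r-1) + Δ where gcd(Δ, (r-1)/(q-1)) = 1. Then the degree of the minimal polynomial of γ^{-d} over GF(q) equals m if Δ ≡ 2s (mod r+1), and equals 2m if Δ ≢ 2s (mod r+1). -/
/-!
Write `α = γ ^ (-d)` and `n` for the degree of its minimal polynomial over `K = GF(q)`. Since the
Frobenius `x ↦ x ^ q` of `K⟮α⟯` has order `n`, we get
`n ∣ k ↔ α ^ q ^ k = α ↔ r ^ 2 - 1 ∣ d (q ^ k - 1)`. Taking `k = 2m` gives `n ∣ 2m`. Taking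
`k = n`, the factor `Φ = (r - 1)/(q - 1)` of `r - 1` is coprime to `d ≡ Δ`, so
`Φ ∣ q ^ n - 1`, which forces `m ∣ n` because `q ^ j - 1 < Φ` for `j < m`. Hence
`n ∈ {m, 2m}`, and `n = m` exactly when `r + 1 ∣ d`, i.e. when `Δ ≡ 2s (mod r + 1)` as
`r ≡ -1`.
-/

open IntermediateField Finset

theorem FiniteField.pow_card_pow_eq_self_iff {K L : Type*} [Field K] [Fintype K] [Field L]
    [Finite L] [Algebra K L] (α : L) (k : ℕ) :
    α ^ Fintype.card K ^ k = α ↔ (minpoly K α).natDegree ∣ k := by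
  rw [← adjoin.finrank (.of_finite K α), ← orderOf_frobeniusAlgHom K K⟮α⟯,
    orderOf_dvd_iff_pow_eq_one]
  have hpow (x : K⟮α⟯) :
      ((frobeniusAlgHom K K⟮α⟯ ^ k) x : L) = (x : L) ^ Fintype.card K ^ k := by
    rw [AlgHom.coe_pow, coe_frobeniusAlgHom, pow_iterate]
    rfl
  constructor
  · intro h
    refine adjoin_algHom_ext K fun x hx => Subtype.ext ?_
    rw [Set.mem_singleton_iff] at hx
    subst hx
    rw [hpow, h]
    rfl
  · intro h
    simpa [h] using (hpow (AdjoinSimple.gen K α)).symm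

theorem zpow_pow_eq_self_iff {G : Type*} [Group G] (g : G) (a : ℤ) (n : ℕ) :
    (g ^ a) ^ n = g ^ a ↔ (orderOf g : ℤ) ∣ a * (n - 1) := by
  rw [← zpow_natCast, ← zpow_mul, orderOf_dvd_iff_zpow_eq_one, mul_sub, mul_one, zpow_sub,
    mul_inv_eq_one]

theorem dvd_of_pow_sub_one_div_dvd_pow_sub_one {q m k : ℕ} (hq : 2 ≤ q)
    (h : ((q : ℤ) ^ m - 1) / ((q : ℤ) - 1) ∣ (q : ℤ) ^ k - 1) : m ∣ k := by
  have hq1 : (q : ℤ) - 1 ≠ 0 := by omega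
  rw [← geom_sum_mul, Int.mul_ediv_cancel _ hq1] at h
  set Φ := ∑ i ∈ range m, (q : ℤ) ^ i
  -- `q ^ k - 1 ≡ q ^ (k % m) - 1` modulo `q ^ m - 1`, and `Φ ∣ q ^ m - 1`
  have hmod : Φ ∣ (q : ℤ) ^ (k % m) - 1 := by
    have hΦ : Φ ∣ ((q : ℤ) ^ m) ^ (k / m) - 1 :=
      (Dvd.intro _ (geom_sum_mul _ _)).trans
        (by simpa using sub_dvd_pow_sub_pow ((q : ℤ) ^ m) 1 (k / m))
    have hsplit : (q : ℤ) ^ k - 1 =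
        (q : ℤ) ^ (k % m) * (((q : ℤ) ^ m) ^ (k / m) - 1) + ((q : ℤ) ^ (k % m) - 1) := by
      conv_lhs => rw [← Nat.mod_add_div k m]
      ring
    rwa [hsplit, dvd_add_right (dvd_mul_of_dvd_right hΦ _)] at h
  have hzero : (q : ℤ) ^ (k % m) - 1 = 0 := by
    rcases m.eq_zero_or_pos with rfl | hm
    · simpa [Φ] using hmod
    have hpos : (1 : ℤ) ≤ (q : ℤ) ^ (k % m) := one_le_pow₀ (by omega)
    have hlt : (q : ℤ) ^ (k % m) ≤ Φ :=
      single_le_sum (fun i _ => by positivity) (mem_range.2 (Nat.mod_lt k hm))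
    exact Int.eq_zero_of_dvd_of_nonneg_of_lt (by omega) (by omega) hmod
  have hone : q ^ (k % m) = 1 := by exact_mod_cast sub_eq_zero.1 hzero
  exact Nat.dvd_of_mod_eq_zero ((Nat.pow_eq_one.1 hone).resolve_left (by omega))

theorem Nat.eq_ite_of_dvd_of_dvd_two_mul {m n : ℕ} (hn : 0 < n) (hmn : m ∣ n)
    (hn2m : n ∣ 2 * m) : n = if n ∣ m then m else 2 * m := by
  split_ifs with hnm
  · exact Nat.dvd_antisymm hnm hmn
  obtain ⟨u, rfl⟩ := hmn
  have hm : m ≠ 0 := by rintro rfl; simp at hn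
  have hu : u ∣ 2 := by rwa [mul_comm 2, Nat.mul_dvd_mul_iff_left (Nat.pos_of_ne_zero hm)] at hn2m
  rcases (Nat.dvd_prime Nat.prime_two).1 hu with rfl | rfl
  · simp at hnm
  · ring

theorem add_one_dvd_mul_sub_one_add_iff (r : ℕ) (s Δ : ℤ) :
    (r : ℤ) + 1 ∣ s * ((r : ℤ) - 1) + Δ ↔ (Δ : ZMod (r + 1)) = 2 * s := by
  have hr : (r : ZMod (r + 1)) = -1 :=
    eq_neg_of_add_eq_zero_left (by exact_mod_cast ZMod.natCast_self (r + 1))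
  rw [show (r : ℤ) + 1 = ((r + 1 : ℕ) : ℤ) by push_cast; ring,
    ← ZMod.intCast_zmod_eq_zero_iff_dvd]
  push_cast
  rw [hr, ← sub_eq_zero (b := 2 * (s : ZMod (r + 1)))]
  ring_nf

theorem stmt2_general (q m r : ℕ) (hr : r = q ^ m)
    (K L : Type) [Field K] [Field L] [Fintype K] [Fintype L] [Algebra K L]
    (hK : Fintype.card K = q) (hL : Fintype.card L = r ^ 2)
    (γ : Lˣ) (hγ : orderOf γ = r ^ 2 - 1)
    (s Δ d : ℤ) (hΔ : Int.gcd Δ ((r - 1) / (q - 1)) = 1)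
    (hd : d = s * ((r : ℤ) - 1) + Δ) :
    (minpoly K ((γ ^ (-d) : Lˣ) : L)).natDegree =
      if (Δ : ZMod (r + 1)) = 2 * (s : ZMod (r + 1)) then m else 2 * m := by
  set α : L := ((γ ^ (-d) : Lˣ) : L)
  set n := (minpoly K α).natDegree
  have hq2 : 2 ≤ q := hK ▸ Fintype.one_lt_card
  have hr2 : 2 ≤ r := (Nat.one_lt_pow_iff two_ne_zero).1 (hL ▸ Fintype.one_lt_card)
  have hrZ : (r : ℤ) = (q : ℤ) ^ m := by rw [hr]; push_cast; rfl
  have hdeg (k : ℕ) : n ∣ k ↔ ((r : ℤ) - 1) * (r + 1) ∣ d * ((q : ℤ) ^ k - 1) := by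
    have hord : ((r ^ 2 - 1 : ℕ) : ℤ) = ((r : ℤ) - 1) * (r + 1) := by
      push_cast [Nat.one_le_pow _ _ (by omega : 0 < r)]; ring
    rw [← FiniteField.pow_card_pow_eq_self_iff, hK, ← Units.val_pow_eq_pow_val, Units.val_inj,
      zpow_pow_eq_self_iff, hγ, hord, neg_mul, dvd_neg]
    push_cast; rfl
  set Φ := ((r : ℤ) - 1) / ((q : ℤ) - 1)
  have hΦ : Φ * ((q : ℤ) - 1) = r - 1 :=
    Int.ediv_mul_cancel (by rw [hrZ]; simpa using sub_dvd_pow_sub_pow (q : ℤ) 1 m)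
  have hcop : IsCoprime Φ d := by
    have hdΦ : d = Δ + Φ * (s * ((q : ℤ) - 1)) := by rw [hd, ← hΦ]; ring
    rw [hdΦ]
    exact ((Int.isCoprime_iff_gcd_eq_one.2 hΔ).add_mul_left_left _).symm
  have hmn : m ∣ n := by
    refine dvd_of_pow_sub_one_div_dvd_pow_sub_one hq2 ?_
    rw [← hrZ]
    exact hcop.dvd_of_dvd_mul_left (((Dvd.intro _ hΦ).mul_right _).trans ((hdeg n).1 dvd_rfl))
  have hn2m : n ∣ 2 * m := (hdeg _).2 (Dvd.intro_left d (by rw [pow_mul', ← hrZ]; ring))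
  have hnm : n ∣ m ↔ (r : ℤ) + 1 ∣ d := by
    rw [hdeg, ← hrZ, mul_comm d, mul_dvd_mul_iff_left (by omega)]
  exact (Nat.eq_ite_of_dvd_of_dvd_two_mul (minpoly.natDegree_pos (.of_finite K α)) hmn hn2m).trans
    (if_congr (hnm.trans (hd ▸ add_one_dvd_mul_sub_one_add_iff r s Δ)) rfl rfl)

/-- Degree of the minimal polynomial of `γ^{-d}` over `GF(q)`, where
`γ` is a primitive element of `GF(r²)`, `r = q^m`, `d = s(r-1) + Δ`
and `gcd(Δ, (r-1)/(q-1)) = 1`: it is `m` if `Δ ≡ 2s (mod r+1)` and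
`2m` otherwise. -/
theorem stmt2 (p l q m r : ℕ) (hp : p.Prime) (hl : 1 ≤ l) (hq : q = p ^ l)
    (hm : 1 ≤ m) (hr : r = q ^ m)
    (K L : Type) [Field K] [Field L] [Fintype K] [Fintype L] [Algebra K L]
    (hK : Fintype.card K = q) (hL : Fintype.card L = r ^ 2)
    (γ : Lˣ) (hγ : orderOf γ = r ^ 2 - 1)
    (s Δ d : ℤ) (hΔ : Int.gcd Δ ((r - 1) / (q - 1)) = 1)
    (hd : d = s * ((r : ℤ) - 1) + Δ) :
    (minpoly K ((γ ^ (-d) : Lˣ) : L)).natDegree =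
      if (Δ : ZMod (r + 1)) = 2 * (s : ZMod (r + 1)) then m else 2 * m :=
  stmt2_general q m r hr K L hK hL γ hγ s Δ d hΔ hd
end

section
/- Let q be a prime power, m ≥ 1, r = q^m, γ a primitive element of GF(r²). Let d = s(r-1) + Δ and d' = s'(r-1) + Δ with gcd(Δ, (r-1)/(q-1)) = 1. Then γ^{-d} and γ^{-d'} have the same minimal polynomial over GF(q) if and only if s ≡ s' (mod r+1) or s + s' ≡ Δ (mod r+1). -/
/-!
The `K`-conjugates of `x ∈ L` are the `x ^ q ^ k`, so with `n = r² - 1 = orderOf γ` the question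
is whether `d ≡ d' q^k (mod n)` for some `k`. Modulo `r - 1` both `d` and `d'` are `≡ Δ`, so
`r - 1 ∣ Δ (q^k - 1)`; as `Δ` is prime to `(r - 1)/(q - 1)` and `q - 1 ∣ q^k - 1`, this forces
`q^m - 1 ∣ q^k - 1`, i.e. `m ∣ k`. Since `r² ≡ 1 (mod n)`, `q^k` is then `1` or `r` modulo `n`,
and these two cases are the two congruences modulo `r + 1`.
-/

theorem FiniteField.minpoly_eq_minpoly_iff_exists_eq_pow {K L : Type*} [Field K] [Fintype K]
    [Field L] [Finite L] [Algebra K L] {x y : L} :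
    minpoly K x = minpoly K y ↔ ∃ k : ℕ, x = y ^ Fintype.card K ^ k := by
  rw [Normal.minpoly_eq_iff_mem_orbit]
  constructor
  · rintro ⟨σ, rfl⟩
    obtain ⟨n, rfl⟩ := (bijective_frobeniusAlgEquivOfAlgebraic_pow K L).2 σ
    exact ⟨n, by simp [AlgEquiv.coe_pow, coe_frobeniusAlgEquivOfAlgebraic_iterate]⟩
  · rintro ⟨k, rfl⟩
    exact ⟨frobeniusAlgEquivOfAlgebraic K L ^ k, by
      simp [AlgEquiv.coe_pow, coe_frobeniusAlgEquivOfAlgebraic_iterate]⟩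

theorem zpow_neg_eq_zpow_neg_pow_iff {G : Type*} [Group G] (γ : G) (d d' : ℤ) (n : ℕ) :
    γ ^ (-d) = (γ ^ (-d')) ^ n ↔ d ≡ d' * n [ZMOD orderOf γ] := by
  rw [← zpow_natCast, ← zpow_mul, zpow_eq_zpow_iff_modEq, neg_mul, Int.neg_modEq_neg]

theorem Nat.pow_sub_one_dvd_pow_sub_one_iff {q m k : ℕ} (hq : 2 ≤ q) :
    q ^ m - 1 ∣ q ^ k - 1 ↔ m ∣ k := by
  refine ⟨fun h => ?_, Nat.pow_sub_one_dvd_pow_sub_one q⟩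
  have hgcd : q ^ Nat.gcd m k - 1 = q ^ m - 1 := by
    rw [← Nat.pow_sub_one_gcd_pow_sub_one, Nat.gcd_eq_left h]
  have := Nat.pow_right_injective hq
    (Nat.sub_one_cancel (Nat.pow_pos (by omega)) (Nat.pow_pos (by omega)) hgcd)
  exact Nat.gcd_eq_left_iff_dvd.mp this

theorem Int.pow_sub_one_dvd_pow_sub_one_iff {q : ℤ} {m k : ℕ} (hq : 2 ≤ q) :
    q ^ m - 1 ∣ q ^ k - 1 ↔ m ∣ k := by
  lift q to ℕ using (by omega)
  rw [← Nat.pow_sub_one_dvd_pow_sub_one_iff (q := q) (by omega), ← Int.natCast_dvd_natCast,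
    Nat.cast_sub (Nat.one_le_pow _ _ (by omega)), Nat.cast_sub (Nat.one_le_pow _ _ (by omega))]
  simp only [Nat.cast_pow, Nat.cast_one]

theorem Int.pow_sub_one_dvd_of_dvd_mul {q Δ : ℤ} {m k : ℕ} (hq : q ≠ 1)
    (hΔ : IsCoprime Δ ((q ^ m - 1) / (q - 1))) (h : q ^ m - 1 ∣ Δ * (q ^ k - 1)) :
    q ^ m - 1 ∣ q ^ k - 1 := by
  have hq1 : q - 1 ≠ 0 := sub_ne_zero.mpr hq
  obtain ⟨N, hN⟩ := sub_one_dvd_pow_sub_one q m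
  obtain ⟨U, hU⟩ := sub_one_dvd_pow_sub_one q k
  rw [hN, Int.mul_ediv_cancel_left _ hq1] at hΔ
  rw [hN, hU, mul_left_comm, mul_dvd_mul_iff_left hq1] at h
  rw [hN, hU, mul_dvd_mul_iff_left hq1]
  exact hΔ.symm.dvd_of_dvd_mul_left h

theorem Int.pow_modEq_one_or_self (r : ℤ) (j : ℕ) :
    r ^ j ≡ 1 [ZMOD r ^ 2 - 1] ∨ r ^ j ≡ r [ZMOD r ^ 2 - 1] := by
  have hsq : r ^ 2 ≡ 1 [ZMOD r ^ 2 - 1] := Int.modEq_iff_dvd.mpr ⟨-1, by ring⟩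
  obtain ⟨i, rfl | rfl⟩ := Nat.even_or_odd' j
  · left
    simpa [pow_mul] using hsq.pow i
  · right
    simpa [pow_succ, pow_mul] using (hsq.pow i).mul_right r

theorem Int.exists_modEq_mul_pow_iff {q Δ d d' : ℤ} {m : ℕ} (hq : 2 ≤ q)
    (hΔ : IsCoprime Δ ((q ^ m - 1) / (q - 1)))
    (hd : d ≡ Δ [ZMOD q ^ m - 1]) (hd' : d' ≡ Δ [ZMOD q ^ m - 1]) :
    (∃ k : ℕ, d ≡ d' * q ^ k [ZMOD (q ^ m) ^ 2 - 1]) ↔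
      d ≡ d' [ZMOD (q ^ m) ^ 2 - 1] ∨ d ≡ d' * q ^ m [ZMOD (q ^ m) ^ 2 - 1] := by
  constructor
  · rintro ⟨k, hk⟩
    have hfac : (q ^ m) ^ 2 - 1 = (q ^ m - 1) * (q ^ m + 1) := by ring
    have hk' : Δ ≡ Δ * q ^ k [ZMOD q ^ m - 1] :=
      hd.symm.trans (((hfac ▸ hk).of_mul_right _).trans (hd'.mul_right _))
    have hdvd : q ^ m - 1 ∣ q ^ k - 1 :=
      Int.pow_sub_one_dvd_of_dvd_mul (by omega) hΔ
        (by simpa [mul_sub] using (Int.modEq_iff_dvd.mp hk'))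
    obtain ⟨j, rfl⟩ := (Int.pow_sub_one_dvd_pow_sub_one_iff hq).mp hdvd
    rw [pow_mul] at hk
    rcases Int.pow_modEq_one_or_self (q ^ m) j with h | h
    · exact .inl (hk.trans (by simpa using h.mul_left d'))
    · exact .inr (hk.trans (h.mul_left d'))
  · rintro (h | h)
    · exact ⟨0, by simpa using h⟩
    · exact ⟨m, h⟩

theorem Int.mul_sub_one_add_modEq_iff {r s t Δ : ℤ} (hr : r ≠ 1) :
    s * (r - 1) + Δ ≡ t * (r - 1) + Δ [ZMOD r ^ 2 - 1] ↔ s ≡ t [ZMOD r + 1] := by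
  rw [show r ^ 2 - 1 = (r + 1) * (r - 1) by ring]
  exact ⟨fun h => (h.add_right_cancel' Δ).mul_right_cancel' (sub_ne_zero.mpr hr),
    fun h => h.mul_right'.add_right Δ⟩

theorem Int.mul_sub_one_add_modEq_mul_self_iff {r s s' Δ : ℤ} (hr : r ≠ 1) :
    s * (r - 1) + Δ ≡ (s' * (r - 1) + Δ) * r [ZMOD r ^ 2 - 1] ↔ s + s' ≡ Δ [ZMOD r + 1] := by
  rw [show (s' * (r - 1) + Δ) * r = (s' * r + Δ) * (r - 1) + Δ by ring,
    Int.mul_sub_one_add_modEq_iff hr, Int.modEq_iff_dvd, Int.modEq_iff_dvd,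
    show s' * r + Δ - s = Δ - (s + s') + s' * (r + 1) by ring]
  exact dvd_add_left (dvd_mul_left _ _)

theorem stmt3_general (q m r : ℕ)
    (hm : 1 ≤ m) (hr : r = q ^ m)
    (K L : Type) [Field K] [Field L] [Fintype K] [Fintype L] [Algebra K L]
    (hK : Fintype.card K = q)
    (γ : Lˣ) (hγ : orderOf γ = r ^ 2 - 1)
    (s s' Δ d d' : ℤ) (hΔ : Int.gcd Δ ((r - 1) / (q - 1)) = 1)
    (hd : d = s * ((r : ℤ) - 1) + Δ) (hd' : d' = s' * ((r : ℤ) - 1) + Δ) :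
    minpoly K ((γ ^ (-d) : Lˣ) : L) = minpoly K ((γ ^ (-d') : Lˣ) : L) ↔
      ((s : ZMod (r + 1)) = (s' : ZMod (r + 1)) ∨
        (s : ZMod (r + 1)) + (s' : ZMod (r + 1)) = (Δ : ZMod (r + 1))) := by
  have hq : 2 ≤ q := hK ▸ Fintype.one_lt_card
  have hrq : (r : ℤ) = (q : ℤ) ^ m := by rw [hr, Nat.cast_pow]
  have hr2 : 2 ≤ r := hr ▸ hq.trans (Nat.le_self_pow (by omega) q)
  have hr1 : (r : ℤ) ≠ 1 := by omega
  have horder : (orderOf γ : ℤ) = (r : ℤ) ^ 2 - 1 := by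
    rw [hγ, Nat.cast_sub (Nat.one_le_pow _ _ (by omega)), Nat.cast_pow, Nat.cast_one]
  have hΔ' : IsCoprime Δ (((q : ℤ) ^ m - 1) / ((q : ℤ) - 1)) := by
    rwa [Int.isCoprime_iff_gcd_eq_one, ← hrq]
  have hdΔ : d ≡ Δ [ZMOD (q : ℤ) ^ m - 1] := Int.modEq_iff_dvd.mpr ⟨-s, by rw [hd, hrq]; ring⟩
  have hdΔ' : d' ≡ Δ [ZMOD (q : ℤ) ^ m - 1] := Int.modEq_iff_dvd.mpr ⟨-s', by rw [hd', hrq]; ring⟩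
  rw [FiniteField.minpoly_eq_minpoly_iff_exists_eq_pow, hK]
  simp_rw [← Units.val_pow_eq_pow_val, ← Units.ext_iff, zpow_neg_eq_zpow_neg_pow_iff, horder,
    Nat.cast_pow, hrq]
  rw [Int.exists_modEq_mul_pow_iff (by exact_mod_cast hq) hΔ' hdΔ hdΔ', ← hrq, hd, hd',
    Int.mul_sub_one_add_modEq_iff hr1, Int.mul_sub_one_add_modEq_mul_self_iff hr1,
    ← Int.cast_add, ZMod.intCast_eq_intCast_iff, ZMod.intCast_eq_intCast_iff, Nat.cast_add_one]

/-- With `r = q^m`, `γ` a primitive element of `GF(r²)`,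
`d = s(r-1) + Δ`, `d' = s'(r-1) + Δ` and `gcd(Δ, (r-1)/(q-1)) = 1`,
the elements `γ^{-d}` and `γ^{-d'}` have the same minimal polynomial over
`GF(q)` iff `s ≡ s' (mod r+1)` or `s + s' ≡ Δ (mod r+1)`. -/
theorem stmt3 (p l q m r : ℕ) (hp : p.Prime) (hl : 1 ≤ l) (hq : q = p ^ l)
    (hm : 1 ≤ m) (hr : r = q ^ m)
    (K L : Type) [Field K] [Field L] [Fintype K] [Fintype L] [Algebra K L]
    (hK : Fintype.card K = q) (hL : Fintype.card L = r ^ 2)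
    (γ : Lˣ) (hγ : orderOf γ = r ^ 2 - 1)
    (s s' Δ d d' : ℤ) (hΔ : Int.gcd Δ ((r - 1) / (q - 1)) = 1)
    (hd : d = s * ((r : ℤ) - 1) + Δ) (hd' : d' = s' * ((r : ℤ) - 1) + Δ) :
    minpoly K ((γ ^ (-d) : Lˣ) : L) = minpoly K ((γ ^ (-d') : Lˣ) : L) ↔
      ((s : ZMod (r + 1)) = (s' : ZMod (r + 1)) ∨
        (s : ZMod (r + 1)) + (s' : ZMod (r + 1)) = (Δ : ZMod (r + 1))) :=
  stmt3_general q m r hm hr K L hK γ hγ s s' Δ d d' hΔ hd hd'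
end

section
/- Let r ≡ 1 (mod 4) be a prime power, γ a primitive element of GF(r²), U the subgroup of (r+1)-st roots of unity, and ξ = γ^{(r+1)/2}. Then every x ∈ GF(r²)* can be written as x = y z ε with y ∈ GF(r)*, z ∈ U, ε ∈ {1, ξ}, and each x ∈ GF(r²)* has exactly two such representations. -/
/-!
Write `f : GF(r)* → GF(r²)*` for the inclusion and `H = f(GF(r)*) · U`. If `f y · z = 1` with
`z ∈ U`, then `z` is both an `(r - 1)`-st and an `(r + 1)`-st root of unity, so `z = ±1`: every
element of `H` has exactly the two factorisations `(y, z)` and `(-y, -z)`. Since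
`γ² = γ^(r+1) · (γ^(r-1))⁻¹ ∈ H`, every `x` lies in `H` or in `ξ H`; and not in both, because every
element of `H` is killed by `(r - 1)(r + 1)/2` while `ξ = γ^((r+1)/2)` is not, `(r + 1)/2` being odd
when `r ≡ 1 (mod 4)`. So `ε` is determined by `x`, and `(y, z)` up to a common sign.
-/

theorem Nat.sq_sub_one_eq_two_mul_of_odd {q : ℕ} (hq : Odd q) :
    q ^ 2 - 1 = 2 * ((q - 1) * ((q + 1) / 2)) := by
  obtain ⟨k, rfl⟩ := hq
  rw [show (2 * k + 1 + 1) / 2 = k + 1 by omega, Nat.add_sub_cancel,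
    show (2 * k + 1) ^ 2 = 4 * k * (k + 1) + 1 by ring, Nat.add_sub_cancel]
  ring

theorem pow_pow_ne_one_of_orderOf_eq_two_mul {G : Type*} [Monoid G] {γ : G} {M s : ℕ}
    (hM : 0 < M) (hγ : orderOf γ = 2 * M) (hs : Odd s) : (γ ^ s) ^ M ≠ 1 := by
  rw [← pow_mul, Ne, ← orderOf_dvd_iff_pow_eq_one, hγ, Nat.mul_dvd_mul_iff_right hM]
  exact hs.not_two_dvd_nat

theorem mem_or_mul_inv_pow_mem_of_sq_mem {G : Type*} [Group G] {γ : G}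
    (hγ : Subgroup.zpowers γ = ⊤) {H : Subgroup G} (hγH : γ ^ 2 ∈ H) {s : ℕ} (hs : Odd s)
    (x : G) : x ∈ H ∨ x * (γ ^ s)⁻¹ ∈ H := by
  have hpow : ∀ k : ℤ, Even k → γ ^ k ∈ H := by
    rintro _ ⟨k, rfl⟩
    rw [← two_mul, zpow_mul, zpow_ofNat]
    exact zpow_mem hγH k
  obtain ⟨m, rfl⟩ := Subgroup.mem_zpowers_iff.1 (hγ ▸ Subgroup.mem_top x)
  rcases Int.even_or_odd m with hm | hm
  · exact .inl (hpow m hm)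
  · rw [← zpow_natCast, ← zpow_neg, ← zpow_add]
    exact .inr (hpow _ (hm.add_odd ((Int.odd_coe_nat s).2 hs).neg))

theorem eq_of_mul_eq_mul_of_mem_of_notMem {G : Type*} [Group G] {H : Subgroup G}
    {ξ a b ε ε' : G} (hξ : ξ ∉ H) (ha : a ∈ H) (hb : b ∈ H) (hε : ε = 1 ∨ ε = ξ)
    (hε' : ε' = 1 ∨ ε' = ξ) (h : a * ε = b * ε') : ε = ε' := by
  have hmem : ε * ε'⁻¹ ∈ H := by
    rw [show ε * ε'⁻¹ = a⁻¹ * b by rw [mul_inv_eq_iff_eq_mul, mul_assoc, ← h, inv_mul_cancel_left]]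
    exact mul_mem (inv_mem ha) hb
  rcases hε with rfl | rfl <;> rcases hε' with rfl | rfl
  · rfl
  · exact absurd (by simpa using hmem) hξ
  · exact absurd (by simpa using hmem) hξ
  · rfl

theorem Units.ne_neg_self_of_odd_card {K : Type*} [Field K] [Fintype K]
    (hq : Odd (Fintype.card K)) (y : Kˣ) : y ≠ -y := by
  have h2 : (2 : K) ≠ 0 := Ring.two_ne_zero <| by
    rw [ne_eq, FiniteField.even_card_iff_char_two, Nat.odd_iff.1 hq]
    decide
  simp [Units.ext_iff, eq_neg_iff_add_eq_zero, ← two_mul, h2]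

section

variable {K L : Type*} [Field K] [Fintype K] [CommRing L] [IsDomain L] [Algebra K L]

theorem range_unitsMap_algebraMap :
    (Units.map (algebraMap K L).toMonoidHom).range = rootsOfUnity (Fintype.card K - 1) L := by
  have : NeZero (Fintype.card K - 1) := ⟨by have := Fintype.one_lt_card (α := K); omega⟩
  refine Subgroup.eq_of_le_of_card_ge ?_ ?_
  · rintro _ ⟨y, rfl⟩
    rw [mem_rootsOfUnity, ← map_pow, ← Nat.card_eq_fintype_card, ← Nat.card_units,
      pow_card_eq_one', map_one]
  · rw [← Nat.card_congr (MonoidHom.ofInjective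
      (Units.map_injective (algebraMap K L).injective)).toEquiv, Nat.card_units,
      Nat.card_eq_fintype_card (α := K)]
    exact card_rootsOfUnity _ _

theorem eq_and_eq_or_eq_neg_and_eq_neg_of_unitsMap_mul_eq {y y' : Kˣ} {z z' : Lˣ}
    (hz : z ∈ rootsOfUnity (Fintype.card K + 1) L)
    (hz' : z' ∈ rootsOfUnity (Fintype.card K + 1) L)
    (h : Units.map (algebraMap K L).toMonoidHom y' * z' =
      Units.map (algebraMap K L).toMonoidHom y * z) :
    y' = y ∧ z' = z ∨ y' = -y ∧ z' = -z := by
  have hu : Units.map (algebraMap K L).toMonoidHom (y' * y⁻¹) = z * z'⁻¹ := by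
    rw [map_mul, map_inv, ← div_eq_mul_inv, ← div_eq_mul_inv, div_eq_div_iff_mul_eq_mul, h,
      mul_comm]
  have hsq : (y' * y⁻¹) ^ 2 = 1 ^ 2 := by
    have hgcd : (Fintype.card K - 1).gcd (Fintype.card K + 1) ∣ 2 := by
      have := Nat.dvd_sub (Nat.gcd_dvd_right (Fintype.card K - 1) (Fintype.card K + 1))
        (Nat.gcd_dvd_left _ _)
      rwa [show Fintype.card K + 1 - (Fintype.card K - 1) = 2 by
        have := Fintype.card_pos (α := K); omega] at this
    have hmem : Units.map (algebraMap K L).toMonoidHom (y' * y⁻¹) ∈ rootsOfUnity 2 L := by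
      refine rootsOfUnity_le_of_dvd hgcd ?_
      rw [← rootsOfUnity_inf_rootsOfUnity]
      refine Subgroup.mem_inf.2 ⟨?_, ?_⟩
      · exact range_unitsMap_algebraMap (K := K) (L := L) ▸ ⟨_, rfl⟩
      · exact hu ▸ mul_mem hz (inv_mem hz')
    apply Units.map_injective (algebraMap K L).injective
    rw [map_pow, (mem_rootsOfUnity _ _).1 hmem, one_pow, map_one]
  rcases Units.eq_or_eq_neg_of_sq_eq_sq _ _ hsq with h1 | h1
  · rw [h1, map_one, eq_comm, mul_inv_eq_one] at hu
    exact .inl ⟨mul_inv_eq_one.1 h1, hu.symm⟩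
  · have hneg : Units.map (algebraMap K L).toMonoidHom (-1) = -1 :=
      Units.map_neg_one (algebraMap K L)
    rw [h1, hneg, eq_comm, mul_inv_eq_iff_eq_mul, neg_one_mul] at hu
    rw [mul_inv_eq_iff_eq_mul, neg_one_mul] at h1
    exact .inr ⟨h1, by rw [hu, neg_neg]⟩

theorem range_unitsMap_sup_rootsOfUnity_le (hq : Odd (Fintype.card K)) :
    (Units.map (algebraMap K L).toMonoidHom).range ⊔ rootsOfUnity (Fintype.card K + 1) L ≤
      rootsOfUnity ((Fintype.card K - 1) * ((Fintype.card K + 1) / 2)) L := by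
  rw [range_unitsMap_algebraMap]
  obtain ⟨k, hk⟩ := hq
  refine sup_le (rootsOfUnity_le_of_dvd (dvd_mul_right _ _)) (rootsOfUnity_le_of_dvd ⟨k, ?_⟩)
  rw [hk, show (2 * k + 1 + 1) / 2 = k + 1 by omega, Nat.add_sub_cancel]
  ring

theorem sq_mem_range_unitsMap_sup_rootsOfUnity {γ : Lˣ}
    (hγ : γ ^ (Fintype.card K ^ 2 - 1) = 1) :
    γ ^ 2 ∈ (Units.map (algebraMap K L).toMonoidHom).range ⊔
      rootsOfUnity (Fintype.card K + 1) L := by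
  have hq := Fintype.card_pos (α := K)
  have hsq : (Fintype.card K + 1) * (Fintype.card K - 1) = Fintype.card K ^ 2 - 1 := by
    rw [← Nat.sq_sub_sq, one_pow]
  rw [show γ ^ 2 = γ ^ (Fintype.card K + 1) * (γ ^ (Fintype.card K - 1))⁻¹ by
    rw [eq_mul_inv_iff_mul_eq, ← pow_add]; congr 1; omega]
  refine Subgroup.mul_mem_sup ?_ (inv_mem ?_)
  · rw [range_unitsMap_algebraMap, mem_rootsOfUnity, ← pow_mul, hsq, hγ]
  · rw [mem_rootsOfUnity, ← pow_mul, mul_comm, hsq, hγ]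

theorem pow_half_notMem_range_unitsMap_sup_rootsOfUnity (hq : Fintype.card K % 4 = 1)
    {γ : Lˣ} (hγ : orderOf γ = Fintype.card K ^ 2 - 1) :
    γ ^ ((Fintype.card K + 1) / 2) ∉
      (Units.map (algebraMap K L).toMonoidHom).range ⊔ rootsOfUnity (Fintype.card K + 1) L := by
  have hK := Fintype.one_lt_card (α := K)
  have hodd : Odd (Fintype.card K) := Nat.odd_iff.2 (by omega)
  exact fun h => pow_pow_ne_one_of_orderOf_eq_two_mul (Nat.mul_pos (by omega) (by omega))
    (hγ.trans (Nat.sq_sub_one_eq_two_mul_of_odd hodd)) (Nat.odd_iff.2 (by omega))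
    (range_unitsMap_sup_rootsOfUnity_le hodd h)

theorem setOf_unitsMap_mul_mul_eq (hq : Odd (Fintype.card K)) {ξ : Lˣ}
    (hξ : ξ ∉ (Units.map (algebraMap K L).toMonoidHom).range ⊔
      rootsOfUnity (Fintype.card K + 1) L)
    {x : Lˣ} {y : Kˣ} {z ε : Lˣ} (hz : z ∈ rootsOfUnity (Fintype.card K + 1) L)
    (hε : ε = 1 ∨ ε = ξ) (hx : Units.map (algebraMap K L).toMonoidHom y * z * ε = x) :
    {t : Kˣ × Lˣ × Lˣ | t.2.1 ^ (Fintype.card K + 1) = 1 ∧ (t.2.2 = 1 ∨ t.2.2 = ξ) ∧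
      Units.map (algebraMap K L).toMonoidHom t.1 * t.2.1 * t.2.2 = x} =
      {(y, z, ε), (-y, -z, ε)} := by
  ext ⟨y', z', ε'⟩
  simp only [Set.mem_ofPred_eq, Set.mem_insert_iff, Set.mem_singleton_iff, Prod.mk.injEq]
  constructor
  · rintro ⟨hz', hε', hx'⟩
    have h := hx'.trans hx.symm
    obtain rfl : ε' = ε := eq_of_mul_eq_mul_of_mem_of_notMem hξ
      (Subgroup.mul_mem_sup ⟨y', rfl⟩ hz') (Subgroup.mul_mem_sup ⟨y, rfl⟩ hz) hε' hε h
    rcases eq_and_eq_or_eq_neg_and_eq_neg_of_unitsMap_mul_eq hz hz' (mul_right_cancel h) with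
      ⟨rfl, rfl⟩ | ⟨rfl, rfl⟩
    · exact .inl ⟨rfl, rfl, rfl⟩
    · exact .inr ⟨rfl, rfl, rfl⟩
  · rintro (⟨rfl, rfl, rfl⟩ | ⟨rfl, rfl, rfl⟩)
    · exact ⟨hz, hε, hx⟩
    · refine ⟨by rw [hq.add_one.neg_pow]; exact hz, hε, ?_⟩
      have hneg : Units.map (algebraMap K L).toMonoidHom (-y) =
          -Units.map (algebraMap K L).toMonoidHom y :=
        Units.map_neg (algebraMap K L) y
      rw [hneg, neg_mul_neg, hx]

end

theorem stmt5_general (r : ℕ)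
    (hr4 : r % 4 = 1)
    (K L : Type) [Field K] [Field L] [Fintype K] [Fintype L] [Algebra K L]
    (hK : Fintype.card K = r) (hL : Fintype.card L = r ^ 2)
    (γ : Lˣ) (hγ : orderOf γ = r ^ 2 - 1)
    (ξ : Lˣ) (hξ : ξ = γ ^ ((r + 1) / 2)) :
    ∀ x : Lˣ,
      Nat.card {t : Kˣ × Lˣ × Lˣ // t.2.1 ^ (r + 1) = 1 ∧ (t.2.2 = 1 ∨ t.2.2 = ξ) ∧
        Units.map (algebraMap K L).toMonoidHom t.1 * t.2.1 * t.2.2 = x} = 2 := by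
  intro x
  subst hK hξ
  have hq : Odd (Fintype.card K) := Nat.odd_iff.2 (by omega)
  have hγ_top : Subgroup.zpowers γ = ⊤ := Subgroup.eq_top_of_card_eq _ <| by
    rw [Nat.card_zpowers, hγ, Nat.card_units, Nat.card_eq_fintype_card, hL]
  obtain ⟨ε, hε, hxε⟩ : ∃ ε, (ε = 1 ∨ ε = γ ^ ((Fintype.card K + 1) / 2)) ∧
      x * ε⁻¹ ∈ (Units.map (algebraMap K L).toMonoidHom).range ⊔
        rootsOfUnity (Fintype.card K + 1) L :=
    (mem_or_mul_inv_pow_mem_of_sq_mem hγ_top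
      (sq_mem_range_unitsMap_sup_rootsOfUnity (hγ ▸ pow_orderOf_eq_one γ))
      (Nat.odd_iff.2 (by omega)) x).elim
      (fun h => ⟨1, .inl rfl, by rwa [inv_one, mul_one]⟩) (fun h => ⟨_, .inr rfl, h⟩)
  obtain ⟨_, ⟨y, rfl⟩, z, hz, hyz⟩ := Subgroup.mem_sup.1 hxε
  have hne : (y, z, ε) ≠ (-y, -z, ε) := fun h =>
    Units.ne_neg_self_of_odd_card hq y (congrArg Prod.fst h)
  calc _ = Set.ncard {(y, z, ε), (-y, -z, ε)} := by
        rw [← setOf_unitsMap_mul_mul_eq hq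
          (pow_half_notMem_range_unitsMap_sup_rootsOfUnity hr4 hγ) hz hε
          (by rw [hyz, inv_mul_cancel_right])]
        rfl
    _ = 2 := Set.ncard_pair hne

/-- Let `r ≡ 1 (mod 4)` be a prime power, `γ` a primitive element of `GF(r²)`,
`ξ = γ^{(r+1)/2}`. Every `x ∈ GF(r²)*` has exactly two representations
`x = y·z·ε` with `y ∈ GF(r)*`, `z^{r+1} = 1` and `ε ∈ {1, ξ}`. -/
theorem stmt5 (p l r : ℕ) (hp : p.Prime) (hl : 1 ≤ l) (hr : r = p ^ l)
    (hr4 : r % 4 = 1)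
    (K L : Type) [Field K] [Field L] [Fintype K] [Fintype L] [Algebra K L]
    (hK : Fintype.card K = r) (hL : Fintype.card L = r ^ 2)
    (γ : Lˣ) (hγ : orderOf γ = r ^ 2 - 1)
    (ξ : Lˣ) (hξ : ξ = γ ^ ((r + 1) / 2)) :
    ∀ x : Lˣ,
      Nat.card {t : Kˣ × Lˣ × Lˣ // t.2.1 ^ (r + 1) = 1 ∧ (t.2.2 = 1 ∨ t.2.2 = ξ) ∧
        Units.map (algebraMap K L).toMonoidHom t.1 * t.2.1 * t.2.2 = x} = 2 :=
  stmt5_general r hr4 K L hK hL γ hγ ξ hξ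
end

section
/- Let r ≥ 2, e ≥ 1, and define B_j = r^{-1}(r-1)^j + (-1)^j(1 - r^{-1}) for j ≥ 2, and N_k by the formula N_k = k! e^k Σ_{λ₂,λ₃,…≥0, Σ j·λ_j = k} C((r+1)/e, Σλ_j) (Σλ_j)! Π_j (B_j/j!)^{λ_j}/(λ_j)!. Then N₂ = e(r² - 1) and N₃ = e²(r-2)(r²-1). -/
/-- `B_j = r⁻¹(r-1)^j + (-1)^j(1 - r⁻¹)`. -/
noncomputable def Bcoef (r : ℚ) (j : ℕ) : ℚ :=
  r⁻¹ * (r - 1) ^ j + (-1) ^ j * (1 - r⁻¹)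

/-- Sequences `(λ_0, …, λ_k)` of non-negative integers with `λ_0 = λ_1 = 0`
and `∑ j·λ_j = k` (any sequence with `∑_{j ≥ 2} j λ_j = k` vanishes beyond
index `k`, so this captures all finitely supported such sequences). -/
def partSeqs (k : ℕ) : Finset (Fin (k + 1) → ℕ) :=
  (Fintype.piFinset fun _ => Finset.range (k + 1)).filter
    fun lam => (∑ j : Fin (k + 1), (j : ℕ) * lam j) = k ∧ ∀ j : Fin (k + 1), (j : ℕ) < 2 → lam j = 0

/-- `N_k = k! e^k ∑_{∑ jλ_j = k} C((r+1)/e, ∑λ_j)(∑λ_j)! ∏_j (B_j/j!)^{λ_j}/λ_j!`. -/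
noncomputable def Ncoef (r e k : ℕ) : ℚ :=
  (k.factorial : ℚ) * (e : ℚ) ^ k *
    ∑ lam ∈ partSeqs k,
      (((r + 1) / e).choose (∑ j : Fin (k + 1), lam j) : ℚ) * ((∑ j : Fin (k + 1), lam j).factorial : ℚ) *
        ∏ j : Fin (k + 1), (Bcoef (r : ℚ) (j : ℕ) / ((j : ℕ).factorial : ℚ)) ^ lam j /
          ((lam j).factorial : ℚ)

/-! For `k = 2, 3` the only admissible `λ` is `λ_k = 1`, so the sum collapses to one term and
`N_k = e^k · ((r+1)/e) · B_k = e^(k-1) (r+1) B_k`;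
moreover `B_2 = r - 1` and `B_3 = (r-1)(r-2)`. -/

theorem Bcoef_two {r : ℚ} (hr : r ≠ 0) : Bcoef r 2 = r - 1 := by
  unfold Bcoef; field_simp; ring

theorem Bcoef_three {r : ℚ} (hr : r ≠ 0) : Bcoef r 3 = (r - 1) * (r - 2) := by
  unfold Bcoef; field_simp; ring

theorem partSeqs_two : partSeqs 2 = {Pi.single (Fin.last 2) 1} := by decide

theorem partSeqs_three : partSeqs 3 = {Pi.single (Fin.last 3) 1} := by decide

theorem Ncoef_of_partSeqs_eq_singleton {k : ℕ} (r e : ℕ)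
    (hk : partSeqs k = {Pi.single (Fin.last k) 1}) :
    Ncoef r e k = (e : ℚ) ^ k * (((r + 1) / e : ℕ) : ℚ) * Bcoef r k := by
  have hprod : ∏ j : Fin (k + 1),
      (Bcoef r j / (j : ℕ).factorial) ^ (Pi.single (Fin.last k) 1 : _ → ℕ) j /
        ((Pi.single (Fin.last k) 1 : _ → ℕ) j).factorial = Bcoef r k / k.factorial := by
    rw [Finset.prod_eq_single (Fin.last k) (fun j _ hj => by simp [hj]) (by simp)]
    simp
  rw [Ncoef, hk, Finset.sum_singleton, hprod, Finset.sum_pi_single' (Fin.last k) 1 Finset.univ]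
  simp only [Finset.mem_univ, if_true, Nat.choose_one_right, Nat.factorial_one, Nat.cast_one]
  field_simp

theorem stmt12_general (r e : ℕ) (hr : 2 ≤ r) (hdvd : e ∣ r + 1) :
    Ncoef r e 2 = (e : ℚ) * ((r : ℚ) ^ 2 - 1) ∧
      Ncoef r e 3 = (e : ℚ) ^ 2 * ((r : ℚ) - 2) * ((r : ℚ) ^ 2 - 1) := by
  have hr0 : (r : ℚ) ≠ 0 := Nat.cast_ne_zero.mpr (by omega)
  have hq : (e : ℚ) * (((r + 1) / e : ℕ) : ℚ) = r + 1 := by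
    exact_mod_cast Nat.mul_div_cancel' hdvd
  rw [Ncoef_of_partSeqs_eq_singleton r e partSeqs_two,
    Ncoef_of_partSeqs_eq_singleton r e partSeqs_three, Bcoef_two hr0, Bcoef_three hr0]
  constructor
  · linear_combination (e : ℚ) * ((r : ℚ) - 1) * hq
  · linear_combination (e : ℚ) ^ 2 * ((r : ℚ) - 1) * ((r : ℚ) - 2) * hq

/-- `N₂ = e(r² - 1)` and `N₃ = e²(r-2)(r²-1)`. -/
theorem stmt12 (r e : ℕ) (hr : 2 ≤ r) (he : 1 ≤ e) (hdvd : e ∣ r + 1) :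
    Ncoef r e 2 = (e : ℚ) * ((r : ℚ) ^ 2 - 1) ∧
      Ncoef r e 3 = (e : ℚ) ^ 2 * ((r : ℚ) - 2) * ((r : ℚ) ^ 2 - 1) :=
  stmt12_general r e hr hdvd
end

section
/- Let r be a power of 2, U = {z ∈ GF(r²) : z^{r+1} = 1}, and for z ∈ U write z̄ = z^r = z^{-1}. For a₀ ∈ GF(r) and a₁,…,a_t ∈ GF(r²) not all zero, let N = #{z ∈ U : a₀ + Σ_{j=1}^t (a_j z^{-2jh} + a_j^r z^{2jh})} = 0}, where e = gcd(h, r+1) and 1 ≤ t < (r+1)/(2e). Then N ∈ {0, e, 2e, …, 2te}, i.e., N = je for some 0 ≤ j ≤ 2t. -/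
/-!
Substituting `u = z ^ (-2h)` is a homomorphism on the cyclic group of `(r+1)`-th roots of unity,
so every nonempty fibre is a coset of its kernel, which has `gcd(2h, r+1) = e` elements because
`r + 1` is odd. In `u` the condition says that a Laurent polynomial with exponents in `[-t, t]`
vanishes; multiplied by `u ^ t` it becomes a nonzero polynomial of degree at most `2t`, so at
most `2t` fibres are hit.
-/

theorem MonoidHom.card_preimage {G H : Type*} [Group G] [Group H] (f : G →* H) (T : Set H) :
    Nat.card (f ⁻¹' T) = Nat.card {y : f.range // (y : H) ∈ T} * Nat.card f.ker := by
  have hpre : f ⁻¹' T =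
      QuotientGroup.mk ⁻¹' {q : G ⧸ f.ker | QuotientGroup.kerLift f q ∈ T} := rfl
  rw [hpre, Nat.card_congr (QuotientGroup.preimageMkEquivSubgroupProdSet _ _), Nat.card_prod,
    mul_comm]
  congr 1
  exact Nat.card_congr <| (QuotientGroup.quotientKerEquivRange f).toEquiv.subtypeEquiv
    fun q => by induction q using QuotientGroup.induction_on; rfl

theorem IsCyclic.card_zpowGroupHom_ker (G : Type*) [CommGroup G] [IsCyclic G] [Finite G] (n : ℤ) :
    Nat.card (zpowGroupHom n : G →* G).ker = (Nat.card G).gcd n.natAbs := by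
  have hker : (zpowGroupHom n : G →* G).ker = (powMonoidHom n.natAbs).ker := by
    ext x; simp [pow_natAbs_eq_one]
  rw [hker, IsCyclic.card_powMonoidHom_ker]

theorem card_rootsOfUnity_of_dvd {R : Type*} [CommRing R] [IsDomain R] [Finite Rˣ] {n : ℕ}
    (hn : n ∣ Nat.card Rˣ) : Nat.card (rootsOfUnity n R) = n := by
  rw [show rootsOfUnity n R = (powMonoidHom n).ker from rfl, IsCyclic.card_powMonoidHom_ker,
    Nat.gcd_eq_right hn]

open Polynomial Finset

section LaurentSum

variable {L : Type*} [Field L] (A : L) (a b : ℕ → L) (t : ℕ)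

def laurentSum (u : Lˣ) : L :=
  A + ∑ i ∈ Icc 1 t, (a i * ((u ^ (i : ℤ) : Lˣ) : L) + b i * ((u ^ (-(i : ℤ)) : Lˣ) : L))

noncomputable def laurentNumerator : L[X] :=
  C A * X ^ t + ∑ i ∈ Icc 1 t, (C (a i) * X ^ (t + i) + C (b i) * X ^ (t - i))

theorem eval_laurentNumerator (u : Lˣ) :
    (laurentNumerator A a b t).eval (u : L) = (u : L) ^ t * laurentSum A a b t u := by
  simp only [laurentNumerator, laurentSum, eval_add, eval_mul, eval_pow, eval_C, eval_X,
    eval_finsetSum, mul_add, mul_sum]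
  refine congrArg₂ (· + ·) (mul_comm _ _) (sum_congr rfl fun i hi => ?_)
  have hit : i ≤ t := (mem_Icc.mp hi).2
  have hu : (u : L) ≠ 0 := u.ne_zero
  rw [Units.val_zpow_eq_zpow_val, Units.val_zpow_eq_zpow_val, zpow_neg, zpow_natCast,
    pow_add, ← Nat.sub_add_cancel hit, Nat.add_sub_cancel]
  field_simp
  ring

theorem natDegree_laurentNumerator_le : (laurentNumerator A a b t).natDegree ≤ 2 * t := by
  unfold laurentNumerator
  refine (natDegree_add_le _ _).trans
    (max_le ?_ (natDegree_sum_le_of_forall_le _ _ fun i hi => ?_))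
  · exact (natDegree_C_mul_X_pow_le _ _).trans (by omega)
  · have hit : i ≤ t := (mem_Icc.mp hi).2
    exact (natDegree_add_le _ _).trans (max_le ((natDegree_C_mul_X_pow_le _ _).trans (by omega))
      ((natDegree_C_mul_X_pow_le _ _).trans (by omega)))

theorem coeff_laurentNumerator_self : (laurentNumerator A a b t).coeff t = A := by
  simp only [laurentNumerator, coeff_add, coeff_C_mul_X_pow, finsetSum_coeff, if_true]
  refine add_eq_left.mpr (sum_eq_zero fun i hi => ?_)
  have := mem_Icc.mp hi
  rw [if_neg (by omega), if_neg (by omega), add_zero]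

theorem coeff_laurentNumerator_add {i : ℕ} (hi : i ∈ Icc 1 t) :
    (laurentNumerator A a b t).coeff (t + i) = a i := by
  have := mem_Icc.mp hi
  simp only [laurentNumerator, coeff_add, coeff_C_mul_X_pow, finsetSum_coeff,
    if_neg (show t + i ≠ t by omega)]
  rw [sum_eq_single_of_mem i hi fun j hj hji => ?_, if_pos rfl, if_neg (by omega), zero_add,
    add_zero]
  have := mem_Icc.mp hj
  rw [if_neg (by omega), if_neg (by omega), add_zero]

theorem laurentNumerator_ne_zero (h : ¬ (A = 0 ∧ ∀ i ∈ Icc 1 t, a i = 0)) :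
    laurentNumerator A a b t ≠ 0 := by
  intro hQ
  refine h ⟨?_, fun i hi => ?_⟩
  · rw [← coeff_laurentNumerator_self A a b t, hQ, coeff_zero]
  · rw [← coeff_laurentNumerator_add A a b t hi, hQ, coeff_zero]

theorem card_laurentSum_eq_zero_le (h : ¬ (A = 0 ∧ ∀ i ∈ Icc 1 t, a i = 0)) :
    Nat.card {u : Lˣ // laurentSum A a b t u = 0} ≤ 2 * t := by
  classical
  set Q := laurentNumerator A a b t
  have hQ : Q ≠ 0 := laurentNumerator_ne_zero A a b t h
  have hroot (u : {u : Lˣ // laurentSum A a b t u = 0}) :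
      ((u : Lˣ) : L) ∈ Q.roots.toFinset := by
    rw [Multiset.mem_toFinset, mem_roots hQ, IsRoot, eval_laurentNumerator, u.2, mul_zero]
  calc Nat.card {u : Lˣ // laurentSum A a b t u = 0}
      ≤ Nat.card Q.roots.toFinset :=
        Nat.card_le_card_of_injective (fun u => ⟨_, hroot u⟩)
          fun u v huv => Subtype.ext (Units.ext (Subtype.ext_iff.mp huv))
    _ = Q.roots.toFinset.card := Nat.card_eq_finsetCard _
    _ ≤ Multiset.card Q.roots := Multiset.toFinset_card_le _
    _ ≤ Q.natDegree := card_roots' Q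
    _ ≤ 2 * t := natDegree_laurentNumerator_le A a b t

theorem exists_card_laurentSum_zpow_eq_zero [Finite L] {m : ℕ} (hm : m ∣ Nat.card Lˣ) (n : ℤ)
    (h : ¬ (A = 0 ∧ ∀ i ∈ Icc 1 t, a i = 0)) :
    ∃ j ≤ 2 * t, Nat.card {z : Lˣ // z ^ m = 1 ∧ laurentSum A a b t (z ^ n) = 0} =
      j * m.gcd n.natAbs := by
  let ψ : rootsOfUnity m L →* rootsOfUnity m L := zpowGroupHom n
  let T : Set (rootsOfUnity m L) := {u | laurentSum A a b t u = 0}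
  have hcount : Nat.card {z : Lˣ // z ^ m = 1 ∧ laurentSum A a b t (z ^ n) = 0} =
      Nat.card (ψ ⁻¹' T) :=
    Nat.card_congr (Equiv.subtypeSubtypeEquivSubtypeInter (· ^ m = 1) _).symm
  have hker : Nat.card ψ.ker = m.gcd n.natAbs := by
    rw [IsCyclic.card_zpowGroupHom_ker, card_rootsOfUnity_of_dvd hm]
  refine ⟨_, ?_, by rw [hcount, ψ.card_preimage, hker]⟩
  calc Nat.card {y : ψ.range // (y : rootsOfUnity m L) ∈ T}
      ≤ Nat.card {u : Lˣ // laurentSum A a b t u = 0} :=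
        Nat.card_le_card_of_injective (fun y => ⟨y.1, y.2⟩) fun y y' hyy' =>
          Subtype.ext <| Subtype.ext <| Subtype.ext <|
            congrArg (Subtype.val : {u : Lˣ // laurentSum A a b t u = 0} → Lˣ) hyy'
    _ ≤ 2 * t := card_laurentSum_eq_zero_le A a b t h

end LaurentSum

theorem stmt16_general (l r : ℕ) (hl : 1 ≤ l) (hr : r = 2 ^ l)
    (K L : Type) [Field K] [Field L] [Fintype L] [Algebra K L]
    (hL : Fintype.card L = r ^ 2)
    (h : ℤ) (e : ℕ) (he : e = Int.gcd h (r + 1))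
    (t : ℕ)
    (a₀ : K) (a : ℕ → L) (hne : ¬ (a₀ = 0 ∧ ∀ j ∈ Finset.Icc 1 t, a j = 0)) :
    ∃ j ≤ 2 * t,
      Nat.card {z : Lˣ // z ^ (r + 1) = 1 ∧
        algebraMap K L a₀ + ∑ i ∈ Finset.Icc 1 t,
          (a i * ((z ^ (-(2 * (i : ℤ) * h)) : Lˣ) : L) +
            (a i) ^ r * ((z ^ (2 * (i : ℤ) * h) : Lˣ) : L)) = 0} = j * e := by
  have hdvd : r + 1 ∣ Nat.card Lˣ := ⟨r - 1, by
    rw [Nat.card_units, Nat.card_eq_fintype_card, hL]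
    simpa using Nat.sq_sub_sq r 1⟩
  have hodd : Odd (r + 1) := (hr ▸ Nat.even_pow.mpr ⟨even_two, by omega⟩ : Even r).add_one
  have hgcd : (r + 1).gcd (-(2 * h)).natAbs = e := by
    rw [show (-(2 * h)).natAbs = 2 * h.natAbs by omega,
      Nat.Coprime.gcd_mul_left_cancel_right _ (Nat.coprime_two_left.mpr hodd), he, Int.gcd,
      Nat.gcd_comm]
    rfl
  have hsubst (z : Lˣ) : laurentSum (algebraMap K L a₀) a (a · ^ r) t (z ^ (-(2 * h))) =
      algebraMap K L a₀ + ∑ i ∈ Icc 1 t, (a i * ((z ^ (-(2 * (i : ℤ) * h)) : Lˣ) : L) +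
        a i ^ r * ((z ^ (2 * (i : ℤ) * h) : Lˣ) : L)) := by
    refine congrArg (_ + ·) (sum_congr rfl fun i _ => ?_)
    rw [← zpow_mul, ← zpow_mul, show -(2 * h) * i = -(2 * i * h) by ring,
      show -(2 * h) * -(i : ℤ) = 2 * i * h by ring]
  obtain ⟨j, hj, hcard⟩ :=
    exists_card_laurentSum_zpow_eq_zero (algebraMap K L a₀) a (a · ^ r) t hdvd (-(2 * h))
      (by simpa using hne)
  refine ⟨j, hj, ?_⟩
  rw [← hgcd, ← hcard]
  exact Nat.card_congr (Equiv.subtypeEquivRight fun z => by rw [hsubst])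

/-- Let `r` be a power of `2`, `GF(r) ⊆ GF(r²)`, `h` an integer,
`e = gcd(h, r+1)`, and `1 ≤ t < (r+1)/(2e)`. For `a₀ ∈ GF(r)` and
`a₁, …, a_t ∈ GF(r²)` not all zero, the number `N` of `z` with `z^{r+1} = 1`
and `a₀ + ∑_{j=1}^t (a_j z^{-2jh} + a_j^r z^{2jh}) = 0` is a multiple `j·e`
of `e` with `0 ≤ j ≤ 2t`. -/
theorem stmt16 (l r : ℕ) (hl : 1 ≤ l) (hr : r = 2 ^ l)
    (K L : Type) [Field K] [Field L] [Fintype K] [Fintype L] [Algebra K L]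
    (hK : Fintype.card K = r) (hL : Fintype.card L = r ^ 2)
    (h : ℤ) (e : ℕ) (he : e = Int.gcd h (r + 1))
    (t : ℕ) (ht1 : 1 ≤ t) (ht2 : 2 * e * t < r + 1)
    (a₀ : K) (a : ℕ → L) (hne : ¬ (a₀ = 0 ∧ ∀ j ∈ Finset.Icc 1 t, a j = 0)) :
    ∃ j ≤ 2 * t,
      Nat.card {z : Lˣ // z ^ (r + 1) = 1 ∧
        algebraMap K L a₀ + ∑ i ∈ Finset.Icc 1 t,
          (a i * ((z ^ (-(2 * (i : ℤ) * h)) : Lˣ) : L) +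
            (a i) ^ r * ((z ^ (2 * (i : ℤ) * h) : Lˣ) : L)) = 0} = j * e :=
  stmt16_general l r hl hr K L hL h e he t a₀ a hne
end

section
/- Let q be a prime power, m ≥ 1, r = q^m, h and f integers, e = gcd(h, r+1), and d_j = (jh + f)(r-1) + 2f mod (r²-1) for 0 ≤ j ≤ t. Then gcd(d₀, d₁, …, d_t, r²-1) = gcd((r+1)f, (r-1)e) provided 1 ≤ t < (r+1)/(2e). -/
/-! Write `a = r - 1` and `b = r + 1`, so that `r² - 1 = a b` and
`d_j ≡ j (h a) + b f (mod a b)`. A divisor `g` of `a b` therefore divides every `d_j` iff it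
divides every term of this progression, and since `t ≥ 1` that happens iff `g` divides its first
term `b f` and its difference `h a`. Together with `a b`, the difference contributes
`gcd(h a, a b) = a gcd(h, b) = a e`. -/

theorem Int.gcd_eq_gcd_of_forall_dvd_iff {a b c d : ℤ}
    (H : ∀ g : ℤ, g ∣ a ∧ g ∣ b ↔ g ∣ c ∧ g ∣ d) : Int.gcd a b = Int.gcd c d := by
  apply Nat.dvd_antisymm <;> rw [← Int.natCast_dvd_natCast]
  · obtain ⟨hc, hd⟩ := (H _).mp ⟨Int.gcd_dvd_left a b, Int.gcd_dvd_right a b⟩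
    exact Int.dvd_coe_gcd hc hd
  · obtain ⟨ha, hb⟩ := (H _).mpr ⟨Int.gcd_dvd_left c d, Int.gcd_dvd_right c d⟩
    exact Int.dvd_coe_gcd ha hb

theorem Int.forall_dvd_mul_add_iff {g u v : ℤ} {t : ℕ} (ht : 1 ≤ t) :
    (∀ j ≤ t, g ∣ (j : ℤ) * u + v) ↔ g ∣ u ∧ g ∣ v := by
  constructor
  · intro H
    have hv : g ∣ v := by simpa using H 0 t.zero_le
    exact ⟨(dvd_add_left hv).mp (by simpa using H 1 ht), hv⟩
  · rintro ⟨hu, hv⟩ j -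
    exact (hu.mul_left _).add hv

theorem Int.dvd_mul_and_dvd_mul_iff_dvd_mul_gcd {g a h b : ℤ} :
    g ∣ a * h ∧ g ∣ a * b ↔ g ∣ a * Int.gcd h b := by
  constructor
  · rintro ⟨gh, gb⟩
    have := Int.dvd_coe_gcd gh gb
    rw [Int.gcd_mul_left, Nat.cast_mul, ← Int.dvd_natAbs, Int.natAbs_mul] at this
    rwa [← Int.dvd_natAbs, Int.natAbs_mul, Int.natAbs_natCast]
  · intro hg
    exact ⟨hg.trans (mul_dvd_mul_left a (Int.gcd_dvd_left h b)),
      hg.trans (mul_dvd_mul_left a (Int.gcd_dvd_right h b))⟩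

theorem Int.dvd_progression_and_dvd_mul_iff {a b h f g : ℤ} {t : ℕ} (ht : 1 ≤ t) {d : ℕ → ℤ}
    (hd : ∀ j ≤ t, d j ≡ j * (h * a) + b * f [ZMOD a * b]) :
    (∀ j ≤ t, g ∣ d j) ∧ g ∣ a * b ↔ g ∣ b * f ∧ g ∣ a * Int.gcd h b :=
  calc (∀ j ≤ t, g ∣ d j) ∧ g ∣ a * b
      ↔ (g ∣ h * a ∧ g ∣ b * f) ∧ g ∣ a * b :=
        and_congr_left fun hg =>
          (forall₂_congr fun j hj => ((hd j hj).of_dvd hg).dvd_iff).trans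
            (Int.forall_dvd_mul_add_iff ht)
    _ ↔ g ∣ b * f ∧ (g ∣ a * h ∧ g ∣ a * b) := by rw [mul_comm h]; tauto
    _ ↔ g ∣ b * f ∧ g ∣ a * Int.gcd h b := by rw [Int.dvd_mul_and_dvd_mul_iff_dvd_mul_gcd]

theorem stmt19_general (r : ℕ)
    (h f : ℤ) (e : ℕ) (he : e = Int.gcd h (r + 1))
    (t : ℕ) (ht1 : 1 ≤ t)
    (d : ℕ → ℤ)
    (hd : ∀ j ≤ t, d j ≡ ((j : ℤ) * h + f) * ((r : ℤ) - 1) + 2 * f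
      [ZMOD ((r : ℤ) ^ 2 - 1)]) :
    Int.gcd (Finset.gcd (Finset.range (t + 1)) d) ((r : ℤ) ^ 2 - 1) =
      Int.gcd (((r : ℤ) + 1) * f) (((r : ℤ) - 1) * (e : ℤ)) := by
  have hN : (r : ℤ) ^ 2 - 1 = (r - 1) * (r + 1) := by ring
  have hd' : ∀ j ≤ t, d j ≡ j * (h * (r - 1)) + (r + 1) * f [ZMOD (r - 1) * (r + 1)] := by
    intro j hj
    rw [← hN]
    convert hd j hj using 1
    ring
  refine Int.gcd_eq_gcd_of_forall_dvd_iff fun g => ?_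
  simp only [Finset.dvd_gcd_iff, Finset.mem_range, Nat.lt_succ_iff, hN, he]
  exact Int.dvd_progression_and_dvd_mul_iff ht1 hd'

/-- Let `q = p^l` be a prime power, `r = q^m`, `h, f` integers,
`e = gcd(h, r+1)` and `d_j ≡ (jh + f)(r-1) + 2f (mod r²-1)` for `0 ≤ j ≤ t`,
with `1 ≤ t < (r+1)/(2e)`. Then
`gcd(d₀, …, d_t, r²-1) = gcd((r+1)f, (r-1)e)`. -/
theorem stmt19 (p l q m r : ℕ) (hp : p.Prime) (hl : 1 ≤ l) (hq : q = p ^ l)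
    (hm : 1 ≤ m) (hr : r = q ^ m)
    (h f : ℤ) (e : ℕ) (he : e = Int.gcd h (r + 1))
    (t : ℕ) (ht1 : 1 ≤ t) (ht2 : 2 * e * t < r + 1)
    (d : ℕ → ℤ)
    (hd : ∀ j ≤ t, d j ≡ ((j : ℤ) * h + f) * ((r : ℤ) - 1) + 2 * f
      [ZMOD ((r : ℤ) ^ 2 - 1)]) :
    Int.gcd (Finset.gcd (Finset.range (t + 1)) d) ((r : ℤ) ^ 2 - 1) =
      Int.gcd (((r : ℤ) + 1) * f) (((r : ℤ) - 1) * (e : ℤ)) :=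
  stmt19_general r h f e he t ht1 d hd
end
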